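/- The assumption of totalness does not affect the logic E: a formula of the language of E is valid in the class of all preference models if and only if it is valid in the class of preference models whose betterness relation ≽ is total (for all worlds s and t, either s ≽ t or t ≽ s). -/

import Mathlib

/-- Formulas of Åqvist's dyadic deontic logic **E**:
`φ ::= p | ¬φ | φ∧φ | □φ | ○(φ/φ)`.
`EForm.ob ψ φ` denotes `○(ψ/φ)` ("ψ is obligatory, given φ"). -/
inductive EForm : Type where
  | atom : ℕ → EForm
  | neg  : EForm → EForm
  | conj : EForm → EForm → EForm
  | box  : EForm → EForm
  | ob   : EForm → EForm → EForm
deriving DecidableEq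

/-- Material implication, defined classically. -/
def EForm.impl (φ ψ : EForm) : EForm := .neg (.conj φ (.neg ψ))

/-- Biconditional. -/
def EForm.iff' (φ ψ : EForm) : EForm := .conj (φ.impl ψ) (ψ.impl φ)

/-- A preference model `M = (W, ≽, V)`: a nonempty set of worlds, a betterness
relation, and a valuation. -/
structure PrefModel where
  W : Type
  ne : Nonempty W
  R : W → W → Prop
  V : ℕ → W → Prop

/-- Satisfaction `M,s ⊨ φ`. In particular
`M,s ⊨ ○(ψ/φ)` iff `opt_≽(‖φ‖) ⊆ ‖ψ‖`, where
`opt_≽(‖φ‖) = {w ∈ ‖φ‖ : ∀ y, (M,y ⊨ φ) → w ≽ y}`. -/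
def PrefModel.sat (M : PrefModel) : M.W → EForm → Prop
  | s, .atom n   => M.V n s
  | s, .neg φ    => ¬ PrefModel.sat M s φ
  | s, .conj φ ψ => PrefModel.sat M s φ ∧ PrefModel.sat M s ψ
  | _, .box φ    => ∀ t, PrefModel.sat M t φ
  | _, .ob ψ φ   => ∀ w, (PrefModel.sat M w φ ∧ ∀ y, PrefModel.sat M y φ → M.R w y) →
                     PrefModel.sat M w ψ

/-- Validity in the class of all preference models. -/
def EValid (φ : EForm) : Prop := ∀ (M : PrefModel) (s : M.W), M.sat s φ

/-! Copy every world of `M` into layers indexed by `ℕ` and let a copy be at least as good as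
everything in its own or a lower layer. The new relation is total, and a copy of `v` beats all
`φ`-worlds iff `v` beats all of them in `M`, since the copies one layer up are beaten only through
`M.R`. So optimal sets, and hence the truth of every formula, are preserved. -/

namespace PrefModel

def totalize (M : PrefModel) : PrefModel where
  W := M.W × ℕ
  ne := let ⟨w⟩ := M.ne; ⟨(w, 0)⟩
  R a b := M.R a.1 b.1 ∨ b.2 ≤ a.2
  V n a := M.V n a.1

variable (M : PrefModel)

theorem totalize_R_total (a b : M.totalize.W) : M.totalize.R a b ∨ M.totalize.R b a :=
  (le_total b.2 a.2).imp Or.inr Or.inr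

theorem totalize_R_forall_iff (P : M.W → Prop) (a : M.totalize.W) :
    (∀ b : M.totalize.W, P b.1 → M.totalize.R a b) ↔ ∀ y, P y → M.R a.1 y := by
  constructor
  · intro h y hy
    exact (h (y, a.2 + 1) hy).resolve_right (by simp)
  · exact fun h b hb => Or.inl (h b.1 hb)

theorem sat_totalize (φ : EForm) (a : M.totalize.W) : M.totalize.sat a φ ↔ M.sat a.1 φ := by
  induction φ generalizing a with
  | atom n => rfl
  | neg φ ih => exact not_congr (ih a)
  | conj φ ψ ihφ ihψ => exact and_congr (ihφ a) (ihψ a)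
  | box φ ih =>
    simp only [sat, ih]
    exact ⟨fun h w => h (w, 0), fun h a => h a.1⟩
  | ob ψ φ ihψ ihφ =>
    simp only [sat, ihψ, ihφ]
    exact ⟨fun h w hw => h (w, 0) ⟨hw.1, (M.totalize_R_forall_iff (M.sat · φ) (w, 0)).mpr hw.2⟩,
      fun h a ha => h a.1 ⟨ha.1, (M.totalize_R_forall_iff (M.sat · φ) a).mp ha.2⟩⟩

end PrefModel

/-- **Totalness does not affect the logic E**: a formula is valid in the class
of all preference models iff it is valid in the class of preference models
whose betterness relation is total. -/
theorem E_total_idle :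
    ∀ φ : EForm,
      EValid φ ↔
        (∀ M : PrefModel, (∀ s t : M.W, M.R s t ∨ M.R t s) → ∀ s : M.W, M.sat s φ) :=
  fun φ => ⟨fun h M _ s => h M s, fun h M s =>
    (M.sat_totalize φ (s, 0)).mp (h M.totalize M.totalize_R_total (s, 0))⟩
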